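/- arXiv:1511.02773 — 5 statements merged into one kernel-verified Lean document; each statement's English description precedes it below -/
import Mathlib

section
/- Let (H,f,g) be an (m,n)-semihyperring and ρ a strongly regular congruence on H. Then the induced operations F([x_1]_ρ,…,[x_m]_ρ) = { [z]_ρ : z ∈ f(x_1,…,x_m) } and G([x_1]_ρ,…,[x_n]_ρ) = [g(x_1,…,x_n)]_ρ on the quotient H/ρ are well defined (independent of the chosen representatives), and (H/ρ, F, G) is an (m,n)-semihyperring: F is an associative m-ary hyperoperation with nonempty values, G is an associative n-ary operation, and G distributes over F. -/
/-- The composition of an `m`-ary hyperoperation `f` with itself at position `i`,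
applied to a `(2m-1)`-tuple:
`f(x_0, …, x_{i-1}, f(x_i, …, x_{i+m-1}), x_{i+m}, …, x_{2m-2})`. -/
def hypComp {H : Type*} {m : ℕ} (f : (Fin m → H) → Set H)
    (x : Fin (2 * m - 1) → H) (i : Fin m) : Set H :=
  ⋃ u ∈ f (fun j : Fin m => x ⟨i.val + j.val, by have := i.isLt; have := j.isLt; omega⟩),
    f (fun k : Fin m =>
      if k.val < i.val then x ⟨k.val, by have := k.isLt; omega⟩
      else if k.val = i.val then u
      else x ⟨m - 1 + k.val, by have := k.isLt; omega⟩)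

/-- The composition of an `n`-ary operation `g` with itself at position `i`,
applied to a `(2n-1)`-tuple:
`g(x_0, …, x_{i-1}, g(x_i, …, x_{i+n-1}), x_{i+n}, …, x_{2n-2})`. -/
def opComp {H : Type*} {n : ℕ} (g : (Fin n → H) → H)
    (x : Fin (2 * n - 1) → H) (i : Fin n) : H :=
  g (fun k : Fin n =>
    if k.val < i.val then x ⟨k.val, by have := k.isLt; omega⟩
    else if k.val = i.val then
      g (fun j : Fin n => x ⟨i.val + j.val, by have := i.isLt; have := j.isLt; omega⟩)
    else x ⟨n - 1 + k.val, by have := k.isLt; omega⟩)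

/-- An `(m,n)`-semihyperring: `f` is an associative `m`-ary hyperoperation with
nonempty values, `g` is an associative `n`-ary operation, and `g` distributes over `f`. -/
structure IsSemihyperring {H : Type*} (m n : ℕ) (f : (Fin m → H) → Set H)
    (g : (Fin n → H) → H) : Prop where
  two_le_m : 2 ≤ m
  two_le_n : 2 ≤ n
  nonempty_values : ∀ x : Fin m → H, (f x).Nonempty
  f_assoc : ∀ (x : Fin (2 * m - 1) → H) (i j : Fin m), hypComp f x i = hypComp f x j
  g_assoc : ∀ (x : Fin (2 * n - 1) → H) (i j : Fin n), opComp g x i = opComp g x j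
  distrib : ∀ (x : Fin n → H) (a : Fin m → H) (i : Fin n),
    (fun u => g (Function.update x i u)) '' (f a)
      = f (fun j : Fin m => g (Function.update x i (a j)))

/-- A strongly regular congruence on an `(m,n)`-semihyperring `(H, f, g)`:
an equivalence relation such that componentwise-related inputs to `f` give
hypersums that are related element-by-element, and `g` is compatible. -/
def IsStronglyRegular {H : Type*} {m n : ℕ} (f : (Fin m → H) → Set H)
    (g : (Fin n → H) → H) (r : H → H → Prop) : Prop :=
  Equivalence r ∧
  (∀ a b : Fin m → H, (∀ i, r (a i) (b i)) → ∀ u ∈ f a, ∀ v ∈ f b, r u v) ∧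
  (∀ x y : Fin n → H, (∀ j, r (x j) (y j)) → r (g x) (g y))


/-- Auxiliary: induced hyperoperation on the quotient. -/
noncomputable def quotHyp {H : Type*} {m : ℕ} (s : Setoid H) (f : (Fin m → H) → Set H)
    (q : Fin m → Quotient s) : Set (Quotient s) :=
  Quotient.mk s '' f (fun i => (q i).out)

/-- Auxiliary: induced operation on the quotient. -/
noncomputable def quotOp {H : Type*} {n : ℕ} (s : Setoid H) (g : (Fin n → H) → H)
    (q : Fin n → Quotient s) : Quotient s :=
  Quotient.mk s (g (fun j => (q j).out))

/-- If `ρ` is a strongly regular congruence on an `(m,n)`-semihyperring `(H, f, g)`,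
then the induced operations `F([x_1], …, [x_m]) = { [z] : z ∈ f(x_1, …, x_m) }` and
`G([x_1], …, [x_n]) = [g(x_1, …, x_n)]` on the quotient `H/ρ` are well defined
(i.e. such operations `F` and `G` exist) and `(H/ρ, F, G)` is an `(m,n)`-semihyperring. -/
theorem quotient_isSemihyperring {H : Type*} [Nonempty H] {m n : ℕ}
    (f : (Fin m → H) → Set H) (g : (Fin n → H) → H)
    (hsr : IsSemihyperring m n f g) (ρ : H → H → Prop)
    (hρ : IsStronglyRegular f g ρ) :
    ∃ (F : (Fin m → Quotient (Setoid.mk ρ hρ.1)) → Set (Quotient (Setoid.mk ρ hρ.1)))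
      (G : (Fin n → Quotient (Setoid.mk ρ hρ.1)) → Quotient (Setoid.mk ρ hρ.1)),
      (∀ x : Fin m → H,
        F (fun i => Quotient.mk (Setoid.mk ρ hρ.1) (x i))
          = Quotient.mk (Setoid.mk ρ hρ.1) '' f x) ∧
      (∀ x : Fin n → H,
        G (fun j => Quotient.mk (Setoid.mk ρ hρ.1) (x j))
          = Quotient.mk (Setoid.mk ρ hρ.1) (g x)) ∧
      IsSemihyperring m n F G := by
  classical
  set s : Setoid H := Setoid.mk ρ hρ.1 with hs
  have hrel : ∀ x : H, ρ ((Quotient.mk s x).out) x := fun x => Quotient.exact (Quotient.out_eq (Quotient.mk s x))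
  have imgEqF : ∀ a b : Fin m → H, (∀ i, ρ (a i) (b i)) →
      Quotient.mk s '' f a = Quotient.mk s '' f b := by
    intro a b hab
    ext q
    simp only [Set.mem_image]
    constructor
    · rintro ⟨u, hu, rfl⟩
      obtain ⟨v, hv⟩ := hsr.nonempty_values b
      exact ⟨v, hv, Quotient.sound (hρ.1.symm (hρ.2.1 a b hab u hu v hv))⟩
    · rintro ⟨v, hv, rfl⟩
      obtain ⟨u, hu⟩ := hsr.nonempty_values a
      exact ⟨u, hu, Quotient.sound (hρ.2.1 a b hab u hu v hv)⟩
  have keyF : ∀ x : Fin m → H,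
      quotHyp s f (fun i => Quotient.mk s (x i)) = Quotient.mk s '' f x := by
    intro x
    exact imgEqF _ _ (fun i => hrel (x i))
  have keyG : ∀ x : Fin n → H,
      quotOp s g (fun j => Quotient.mk s (x j)) = Quotient.mk s (g x) := by
    intro x
    exact Quotient.sound (hρ.2.2 _ _ (fun j => hrel (x j)))
  refine ⟨quotHyp s f, quotOp s g, keyF, keyG, ?_, ?_, ?_, ?_, ?_, ?_⟩
  · exact hsr.two_le_m
  · exact hsr.two_le_n
  · intro q
    obtain ⟨u, hu⟩ := hsr.nonempty_values (fun i => (q i).out)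
    exact ⟨Quotient.mk s u, u, hu, rfl⟩
  · -- f_assoc
    have hcomp : ∀ (x : Fin (2 * m - 1) → Quotient s) (i : Fin m),
        hypComp (quotHyp s f) x i
          = Quotient.mk s '' hypComp f (fun k => (x k).out) i := by
      intro x i
      unfold hypComp
      rw [show quotHyp s f
            (fun j : Fin m => x ⟨i.val + j.val, by have := i.isLt; have := j.isLt; omega⟩)
          = Quotient.mk s '' f
            (fun j : Fin m => (x ⟨i.val + j.val, by have := i.isLt; have := j.isLt; omega⟩).out)
          from rfl]
      rw [Set.biUnion_image, Set.image_iUnion₂]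
      refine Set.iUnion₂_congr ?_
      intro w _
      show Quotient.mk s '' f _ = Quotient.mk s '' f _
      refine imgEqF _ _ ?_
      intro k
      beta_reduce
      by_cases h1 : k.val < i.val
      · rw [if_pos h1, if_pos h1]
        exact hρ.1.refl _
      · by_cases h2 : k.val = i.val
        · rw [if_neg h1, if_neg h1, if_pos h2, if_pos h2]
          exact hrel w
        · rw [if_neg h1, if_neg h1, if_neg h2, if_neg h2]
          exact hρ.1.refl _
    intro x i j
    rw [hcomp, hcomp, hsr.f_assoc]
  · -- g_assoc
    have hcomp : ∀ (x : Fin (2 * n - 1) → Quotient s) (i : Fin n),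
        opComp (quotOp s g) x i
          = Quotient.mk s (opComp g (fun k => (x k).out) i) := by
      intro x i
      unfold opComp
      refine Quotient.sound (hρ.2.2 _ _ ?_)
      intro k
      beta_reduce
      by_cases h1 : k.val < i.val
      · rw [if_pos h1, if_pos h1]
        exact hρ.1.refl _
      · by_cases h2 : k.val = i.val
        · rw [if_neg h1, if_neg h1, if_pos h2, if_pos h2]
          exact hrel _
        · rw [if_neg h1, if_neg h1, if_neg h2, if_neg h2]
          exact hρ.1.refl _
    intro x i j
    rw [hcomp, hcomp, hsr.g_assoc]
  · -- distrib
    intro x a i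
    show (fun u => quotOp s g (Function.update x i u)) '' (quotHyp s f a)
        = quotHyp s f (fun j => quotOp s g (Function.update x i (a j)))
    have h1 : ∀ w : H, quotOp s g (Function.update x i (Quotient.mk s w))
        = Quotient.mk s (g (Function.update (fun t => (x t).out) i w)) := by
      intro w
      refine Quotient.sound (hρ.2.2 _ _ ?_)
      intro t
      rcases eq_or_ne t i with rfl | ht
      · simp only [Function.update_self]
        exact hrel w
      · simp only [Function.update_of_ne ht]
        exact hρ.1.refl _
    have h2 : ∀ j : Fin m, (fun t => ((Function.update x i (a j)) t).out)
        = Function.update (fun t => (x t).out) i ((a j).out) := by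
      intro j
      funext t
      rcases eq_or_ne t i with rfl | ht
      · simp only [Function.update_self]
      · simp only [Function.update_of_ne ht]
    calc (fun u => quotOp s g (Function.update x i u)) '' (quotHyp s f a)
        = (fun w => quotOp s g (Function.update x i (Quotient.mk s w)))
            '' f (fun j => (a j).out) := by
          show _ '' (Quotient.mk s '' _) = _
          rw [Set.image_image]
      _ = Quotient.mk s '' ((fun w => g (Function.update (fun t => (x t).out) i w))
            '' f (fun j => (a j).out)) := by
          rw [Set.image_image]
          exact Set.image_congr (fun w _ => h1 w)
      _ = Quotient.mk s '' f (fun j => g (Function.update (fun t => (x t).out) i ((a j).out))) := by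
          rw [hsr.distrib]
      _ = quotHyp s f (fun j => quotOp s g (Function.update x i (a j))) := by
          show _ = Quotient.mk s '' f _
          refine imgEqF _ _ ?_
          intro j
          show ρ _ ((quotOp s g (Function.update x i (a j))).out)
          have : quotOp s g (Function.update x i (a j))
              = Quotient.mk s (g (Function.update (fun t => (x t).out) i ((a j).out))) := by
            unfold quotOp
            rw [h2 j]
          rw [this]
          exact hρ.1.symm (hrel _)
end

section
/- Let ρ and σ be strongly regular congruences on an (m,n)-semihyperring (H,f,g) with ρ ⊆ σ. Then the relation σ/ρ = { ([x]_ρ, [y]_ρ) ∈ H/ρ × H/ρ : (x,y) ∈ σ } is a strongly regular congruence on the quotient (m,n)-semihyperring (H/ρ, F, G). -/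
/-- Let `ρ ⊆ σ` be strongly regular congruences on an `(m,n)`-semihyperring `(H, f, g)`,
and let `(H/ρ, F, G)` be the quotient `(m,n)`-semihyperring, i.e.
`F([x_1], …, [x_m]) = { [z] : z ∈ f(x_1, …, x_m) }` and `G([x_1], …, [x_n]) = [g(x_1, …, x_n)]`.
Then `σ/ρ = { ([x]_ρ, [y]_ρ) : (x, y) ∈ σ }` is a strongly regular congruence on `(H/ρ, F, G)`. -/
theorem quotient_congruence {H : Type*} [Nonempty H] {m n : ℕ}
    (f : (Fin m → H) → Set H) (g : (Fin n → H) → H)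
    (hsr : IsSemihyperring m n f g) (ρ σ : H → H → Prop)
    (hρ : IsStronglyRegular f g ρ) (hσ : IsStronglyRegular f g σ)
    (hsub : ∀ x y : H, ρ x y → σ x y)
    (F : (Fin m → Quotient (Setoid.mk ρ hρ.1)) → Set (Quotient (Setoid.mk ρ hρ.1)))
    (G : (Fin n → Quotient (Setoid.mk ρ hρ.1)) → Quotient (Setoid.mk ρ hρ.1))
    (hF : ∀ x : Fin m → H,
      F (fun i => Quotient.mk (Setoid.mk ρ hρ.1) (x i))
        = Quotient.mk (Setoid.mk ρ hρ.1) '' f x)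
    (hG : ∀ x : Fin n → H,
      G (fun j => Quotient.mk (Setoid.mk ρ hρ.1) (x j))
        = Quotient.mk (Setoid.mk ρ hρ.1) (g x)) :
    IsStronglyRegular F G (fun q₁ q₂ =>
      ∃ x y : H, q₁ = Quotient.mk (Setoid.mk ρ hρ.1) x ∧
        q₂ = Quotient.mk (Setoid.mk ρ hρ.1) y ∧ σ x y) := by
  classical
  obtain ⟨hσeq, hσf, hσg⟩ := hσ
  have key : ∀ x y : H, Quotient.mk (Setoid.mk ρ hρ.1) x = Quotient.mk (Setoid.mk ρ hρ.1) y → σ x y := by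
    intro x y h
    exact hsub x y (Quotient.exact h)
  refine ⟨⟨?_, ?_, ?_⟩, ?_, ?_⟩
  · intro q
    obtain ⟨x, rfl⟩ := Quotient.exists_rep q
    exact ⟨x, x, rfl, rfl, hσeq.refl x⟩
  · rintro q₁ q₂ ⟨x, y, rfl, rfl, h⟩
    exact ⟨y, x, rfl, rfl, hσeq.symm h⟩
  · rintro q₁ q₂ q₃ ⟨x, y, rfl, h2, h⟩ ⟨y', z, h2', rfl, h'⟩
    exact ⟨x, z, rfl, rfl, hσeq.trans h (hσeq.trans (key y y' (h2 ▸ h2')) h')⟩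
  · intro a b hab u hu v hv
    choose x y hx hy hxy using hab
    have ha : a = fun i => Quotient.mk (Setoid.mk ρ hρ.1) (x i) := funext hx
    have hb : b = fun i => Quotient.mk (Setoid.mk ρ hρ.1) (y i) := funext hy
    rw [ha, hF] at hu
    rw [hb, hF] at hv
    obtain ⟨u', hu', rfl⟩ := hu
    obtain ⟨v', hv', rfl⟩ := hv
    exact ⟨u', v', rfl, rfl, hσf x y hxy u' hu' v' hv'⟩
  · intro p q hpq
    choose x y hx hy hxy using hpq
    have hp : p = fun j => Quotient.mk (Setoid.mk ρ hρ.1) (x j) := funext hx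
    have hq : q = fun j => Quotient.mk (Setoid.mk ρ hρ.1) (y j) := funext hy
    rw [hp, hq, hG, hG]
    exact ⟨g x, g y, rfl, rfl, hσg x y hxy⟩
end

section
/- Let ρ and σ be strongly regular congruences on an (m,n)-semihyperring (H,f,g) with ρ ⊆ σ, and let σ/ρ = { ([x]_ρ, [y]_ρ) : (x,y) ∈ σ } be the induced strongly regular congruence on (H/ρ, F, G). Then the map φ : (H/ρ)/(σ/ρ) → H/σ sending the (σ/ρ)-class of [x]_ρ to [x]_σ is well defined, bijective, and is a homomorphism of (m,n)-semihyperrings from the quotient ((H/ρ)/(σ/ρ), with the operations induced from F and G) to (H/σ, with the operations induced from f and g); in particular (H/ρ)/(σ/ρ) ≅ H/σ. -/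
/-- A homomorphism of `(m,n)`-semihyperrings. -/
def IsHom {H S : Type*} {m n : ℕ} (f : (Fin m → H) → Set H) (g : (Fin n → H) → H)
    (f' : (Fin m → S) → Set S) (g' : (Fin n → S) → S) (σ : H → S) : Prop :=
  (∀ x : Fin m → H, σ '' f x = f' (fun i => σ (x i))) ∧
  (∀ y : Fin n → H, σ (g y) = g' (fun j => σ (y j)))

/-- The relation `σ/ρ = { ([x]_ρ, [y]_ρ) : (x, y) ∈ σ }` on the quotient `H/ρ`. -/
def quotRel {H : Type*} (ρ σ : H → H → Prop) (h : Equivalence ρ) :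
    Quotient (Setoid.mk ρ h) → Quotient (Setoid.mk ρ h) → Prop := fun q₁ q₂ =>
  ∃ x y : H, q₁ = Quotient.mk (Setoid.mk ρ h) x ∧ q₂ = Quotient.mk (Setoid.mk ρ h) y ∧ σ x y

/-- **Second isomorphism theorem for `(m,n)`-semihyperrings.**
Let `ρ ⊆ σ` be strongly regular congruences on an `(m,n)`-semihyperring `(H, f, g)`,
let `(H/ρ, F, G)` be the quotient `(m,n)`-semihyperring, let `σ/ρ` be the induced
strongly regular congruence on `H/ρ`, let `(F₂, G₂)` be the operations induced by
`(F, G)` on `(H/ρ)/(σ/ρ)`, and let `(Fσ, Gσ)` be the operations induced by `(f, g)`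
on `H/σ`.  Then the map `φ : (H/ρ)/(σ/ρ) → H/σ` sending the `σ/ρ`-class of `[x]_ρ`
to `[x]_σ` is well defined, bijective, and a homomorphism of `(m,n)`-semihyperrings;
in particular `(H/ρ)/(σ/ρ) ≅ H/σ`. -/
theorem second_isomorphism {H : Type*} [Nonempty H] {m n : ℕ}
    (f : (Fin m → H) → Set H) (g : (Fin n → H) → H)
    (hsr : IsSemihyperring m n f g) (ρ σ : H → H → Prop)
    (hρ : IsStronglyRegular f g ρ) (hσ : IsStronglyRegular f g σ)
    (hsub : ∀ x y : H, ρ x y → σ x y)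
    -- the quotient operations on H/ρ
    (F : (Fin m → Quotient (Setoid.mk ρ hρ.1)) → Set (Quotient (Setoid.mk ρ hρ.1)))
    (G : (Fin n → Quotient (Setoid.mk ρ hρ.1)) → Quotient (Setoid.mk ρ hρ.1))
    (hF : ∀ x : Fin m → H,
      F (fun i => Quotient.mk (Setoid.mk ρ hρ.1) (x i))
        = Quotient.mk (Setoid.mk ρ hρ.1) '' f x)
    (hG : ∀ x : Fin n → H,
      G (fun j => Quotient.mk (Setoid.mk ρ hρ.1) (x j))
        = Quotient.mk (Setoid.mk ρ hρ.1) (g x))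
    -- σ/ρ is a strongly regular congruence on (H/ρ, F, G)
    (hR : IsStronglyRegular F G (quotRel ρ σ hρ.1))
    -- the quotient operations on (H/ρ)/(σ/ρ)
    (F₂ : (Fin m → Quotient (Setoid.mk (quotRel ρ σ hρ.1) hR.1)) →
      Set (Quotient (Setoid.mk (quotRel ρ σ hρ.1) hR.1)))
    (G₂ : (Fin n → Quotient (Setoid.mk (quotRel ρ σ hρ.1) hR.1)) →
      Quotient (Setoid.mk (quotRel ρ σ hρ.1) hR.1))
    (hF₂ : ∀ q : Fin m → Quotient (Setoid.mk ρ hρ.1),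
      F₂ (fun i => Quotient.mk (Setoid.mk (quotRel ρ σ hρ.1) hR.1) (q i))
        = Quotient.mk (Setoid.mk (quotRel ρ σ hρ.1) hR.1) '' F q)
    (hG₂ : ∀ q : Fin n → Quotient (Setoid.mk ρ hρ.1),
      G₂ (fun j => Quotient.mk (Setoid.mk (quotRel ρ σ hρ.1) hR.1) (q j))
        = Quotient.mk (Setoid.mk (quotRel ρ σ hρ.1) hR.1) (G q))
    -- the quotient operations on H/σ
    (Fσ : (Fin m → Quotient (Setoid.mk σ hσ.1)) → Set (Quotient (Setoid.mk σ hσ.1)))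
    (Gσ : (Fin n → Quotient (Setoid.mk σ hσ.1)) → Quotient (Setoid.mk σ hσ.1))
    (hFσ : ∀ x : Fin m → H,
      Fσ (fun i => Quotient.mk (Setoid.mk σ hσ.1) (x i))
        = Quotient.mk (Setoid.mk σ hσ.1) '' f x)
    (hGσ : ∀ x : Fin n → H,
      Gσ (fun j => Quotient.mk (Setoid.mk σ hσ.1) (x j))
        = Quotient.mk (Setoid.mk σ hσ.1) (g x)) :
    ∃ φ : Quotient (Setoid.mk (quotRel ρ σ hρ.1) hR.1) → Quotient (Setoid.mk σ hσ.1),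
      (∀ x : H,
        φ (Quotient.mk (Setoid.mk (quotRel ρ σ hρ.1) hR.1)
            (Quotient.mk (Setoid.mk ρ hρ.1) x)) = Quotient.mk (Setoid.mk σ hσ.1) x) ∧
      Function.Bijective φ ∧ IsHom F₂ G₂ Fσ Gσ φ := by
  classical
  have hψwell : ∀ a b : H, ρ a b →
      Quotient.mk (Setoid.mk σ hσ.1) a = Quotient.mk (Setoid.mk σ hσ.1) b :=
    fun a b h => Quotient.sound (hsub a b h)
  set ψ : Quotient (Setoid.mk ρ hρ.1) → Quotient (Setoid.mk σ hσ.1) :=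
    Quotient.lift (Quotient.mk (Setoid.mk σ hσ.1)) hψwell with hψ
  have hφwell : ∀ q₁ q₂ : Quotient (Setoid.mk ρ hρ.1),
      quotRel ρ σ hρ.1 q₁ q₂ → ψ q₁ = ψ q₂ := by
    rintro q₁ q₂ ⟨x, y, rfl, rfl, hxy⟩
    exact Quotient.sound hxy
  refine ⟨Quotient.lift ψ hφwell, fun x => rfl, ⟨?_, ?_⟩, ?_, ?_⟩
  · intro a b hab
    obtain ⟨qa, rfl⟩ := Quotient.exists_rep a
    obtain ⟨qb, rfl⟩ := Quotient.exists_rep b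
    obtain ⟨x, rfl⟩ := Quotient.exists_rep qa
    obtain ⟨y, rfl⟩ := Quotient.exists_rep qb
    have : σ x y := Quotient.exact hab
    exact Quotient.sound ⟨x, y, rfl, rfl, this⟩
  · intro b
    obtain ⟨x, rfl⟩ := Quotient.exists_rep b
    exact ⟨Quotient.mk _ (Quotient.mk _ x), rfl⟩
  · intro p
    have hrep : p = fun i =>
        Quotient.mk (Setoid.mk (quotRel ρ σ hρ.1) hR.1)
          (Quotient.mk (Setoid.mk ρ hρ.1) ((p i).out.out)) := by
      funext i
      rw [Quotient.out_eq, Quotient.out_eq]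
    set x : Fin m → H := fun i => (p i).out.out with hx
    rw [hrep]
    rw [hF₂, hF x]
    have hrhs : (fun i => Quotient.lift ψ hφwell
        ((fun i => Quotient.mk (Setoid.mk (quotRel ρ σ hρ.1) hR.1)
          (Quotient.mk (Setoid.mk ρ hρ.1) (x i))) i))
        = fun i => Quotient.mk (Setoid.mk σ hσ.1) (x i) := rfl
    rw [hrhs, hFσ]
    ext z
    simp only [Set.mem_image]
    constructor
    · rintro ⟨q, ⟨r, ⟨w, hw, rfl⟩, rfl⟩, rfl⟩
      exact ⟨w, hw, rfl⟩
    · rintro ⟨w, hw, rfl⟩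
      exact ⟨Quotient.mk _ (Quotient.mk _ w), ⟨Quotient.mk _ w, ⟨w, hw, rfl⟩, rfl⟩, rfl⟩
  · intro p
    have hrep : p = fun j =>
        Quotient.mk (Setoid.mk (quotRel ρ σ hρ.1) hR.1)
          (Quotient.mk (Setoid.mk ρ hρ.1) ((p j).out.out)) := by
      funext j
      rw [Quotient.out_eq, Quotient.out_eq]
    set x : Fin n → H := fun j => (p j).out.out with hx
    rw [hrep, hG₂, hG x]
    have hrhs : (fun j => Quotient.lift ψ hφwell
        ((fun j => Quotient.mk (Setoid.mk (quotRel ρ σ hρ.1) hR.1)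
          (Quotient.mk (Setoid.mk ρ hρ.1) (x j))) j))
        = fun j => Quotient.mk (Setoid.mk σ hσ.1) (x j) := rfl
    rw [hrhs, hGσ]
    rfl
end

section
/- Let (H,f,g) be an (m,n)-semihyperring and μ : H → [0,1] a fuzzy subset. Then μ is a fuzzy hyperideal of H if and only if for every t ∈ [0,1] such that the level subset μ_t = { x ∈ H : μ(x) ≥ t } is nonempty, μ_t is a hyperideal of H, i.e. f(x_1,…,x_m) ⊆ μ_t whenever x_1,…,x_m ∈ μ_t, and g(a_1,…,a_{j-1}, x, a_{j+1},…,a_n) ∈ μ_t for every 1 ≤ j ≤ n, all a_1,…,a_n ∈ H and every x ∈ μ_t. -/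
/-- A fuzzy subset `μ : H → [0,1]` is a fuzzy hyperideal of the `(m,n)`-semihyperring
`(H, f, g)` if `min{μ(x_1), …, μ(x_m)} ≤ inf_{z ∈ f(x_1,…,x_m)} μ(z)` and
`μ(x_j) ≤ μ(g(x_1, …, x_n))` for every `1 ≤ j ≤ n`. -/
def IsFuzzyHyperideal {H : Type*} {m n : ℕ} (f : (Fin m → H) → Set H)
    (g : (Fin n → H) → H) (μ : H → ℝ) : Prop :=
  (∀ x : Fin m → H, (⨅ i, μ (x i)) ≤ sInf (μ '' f x)) ∧
  (∀ (x : Fin n → H) (j : Fin n), μ (x j) ≤ μ (g x))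

/-- A fuzzy subset `μ` of an `(m,n)`-semihyperring `(H, f, g)` is a fuzzy hyperideal
if and only if every nonempty level subset `μ_t = {x : t ≤ μ x}` (`t ∈ [0,1]`) is a
hyperideal of `H`: it is closed under `f` and absorbs `g` in each argument. -/
theorem fuzzyHyperideal_iff_levels {H : Type*} [Nonempty H] {m n : ℕ}
    (f : (Fin m → H) → Set H) (g : (Fin n → H) → H)
    (hsr : IsSemihyperring m n f g)
    (μ : H → ℝ) (hμ : ∀ x, μ x ∈ Set.Icc (0 : ℝ) 1) :
    IsFuzzyHyperideal f g μ ↔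
      ∀ t ∈ Set.Icc (0 : ℝ) 1, {x : H | t ≤ μ x}.Nonempty →
        (∀ x : Fin m → H, (∀ i, t ≤ μ (x i)) → f x ⊆ {z : H | t ≤ μ z}) ∧
        (∀ (a : Fin n → H) (j : Fin n) (x : H), t ≤ μ x →
          t ≤ μ (g (Function.update a j x))) := by
  have hm : Nonempty (Fin m) := ⟨⟨0, by have := hsr.two_le_m; omega⟩⟩
  constructor
  · rintro ⟨h1, h2⟩ t _ _
    constructor
    · intro x hx z hz
      have hbdd : BddBelow (μ '' f x) := ⟨0, fun y ⟨w, _, hw⟩ => hw ▸ (hμ w).1⟩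
      have : t ≤ ⨅ i, μ (x i) := le_ciInf hx
      exact le_trans (le_trans this (h1 x)) (csInf_le hbdd ⟨z, hz, rfl⟩)
    · intro a j x hx
      have := h2 (Function.update a j x) j
      rw [Function.update_self] at this
      exact le_trans hx this
  · intro h
    constructor
    · intro x
      set t := ⨅ i, μ (x i) with ht
      have hbdd : BddBelow (Set.range fun i => μ (x i)) :=
        (Set.finite_range _).bddBelow
      have htle : ∀ i, t ≤ μ (x i) := fun i => ciInf_le hbdd i
      have htIcc : t ∈ Set.Icc (0 : ℝ) 1 := by
        constructor
        · exact le_ciInf fun i => (hμ (x i)).1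
        · exact le_trans (htle hm.some) (hμ _).2
      have hne : {y : H | t ≤ μ y}.Nonempty := ⟨x hm.some, htle hm.some⟩
      have hsub := (h t htIcc hne).1 x htle
      refine le_csInf ?_ ?_
      · exact (hsr.nonempty_values x).image μ
      · rintro b ⟨z, hz, rfl⟩
        exact hsub hz
    · intro x j
      set t := μ (x j)
      have := (h t (hμ (x j)) ⟨x j, show t ≤ μ (x j) from le_refl _⟩).2 x j (x j) (le_refl _)
      rwa [Function.update_eq_self] at this
end

section
/- Let (H,f,g) be an (m,n)-semihyperring and μ : H → [0,1] a fuzzy subset whose maximum value t_0 is attained, i.e. μ(x) ≤ t_0 for all x ∈ H and μ(x_0) = t_0 for some x_0 ∈ H. Then the following are equivalent: (i) μ is a fuzzy hyperideal of H; (ii) every nonempty level subset μ_t (t ∈ [0,1]) is a hyperideal of H; (iii) for every t ∈ [0,t_0], the level subset μ_t is a hyperideal of H. Here a subset J ⊆ H is a hyperideal if it is nonempty, f(x_1,…,x_m) ⊆ J whenever x_1,…,x_m ∈ J, and g(a_1,…,a_{j-1}, x, a_{j+1},…,a_n) ∈ J for every 1 ≤ j ≤ n, all a_1,…,a_n ∈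 H and every x ∈ J. -/
/-- `J` is a hyperideal of the `(m,n)`-semihyperring `(H, f, g)`: it is nonempty,
closed under `f`, and `g(a_1, …, a_{j-1}, x, a_{j+1}, …, a_n) ∈ J` for every
position `j`, all `a_1, …, a_n ∈ H` and every `x ∈ J`. -/
def IsHyperideal {H : Type*} {m n : ℕ} (f : (Fin m → H) → Set H)
    (g : (Fin n → H) → H) (J : Set H) : Prop :=
  J.Nonempty ∧ (∀ x : Fin m → H, (∀ i, x i ∈ J) → f x ⊆ J) ∧
    (∀ (a : Fin n → H) (j : Fin n) (x : H), x ∈ J → g (Function.update a j x) ∈ J)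

/-- Let `μ : H → [0,1]` be a fuzzy subset of an `(m,n)`-semihyperring whose maximum
value `t₀` is attained.  Then the following are equivalent:
(i) `μ` is a fuzzy hyperideal of `H`;
(ii) every nonempty level subset `μ_t` (`t ∈ [0,1]`) is a hyperideal of `H`;
(iii) for every `t ∈ [0, t₀]`, the level subset `μ_t` is a hyperideal of `H`. -/
theorem fuzzyHyperideal_tfae {H : Type*} [Nonempty H] {m n : ℕ}
    (f : (Fin m → H) → Set H) (g : (Fin n → H) → H)
    (hsr : IsSemihyperring m n f g)
    (μ : H → ℝ) (hμ : ∀ x, μ x ∈ Set.Icc (0 : ℝ) 1)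
    (t₀ : ℝ) (ht₀ : ∀ x, μ x ≤ t₀) (hatt : ∃ x₀, μ x₀ = t₀) :
    (IsFuzzyHyperideal f g μ ↔
      ∀ t ∈ Set.Icc (0 : ℝ) 1, {x : H | t ≤ μ x}.Nonempty →
        IsHyperideal f g {x : H | t ≤ μ x}) ∧
    ((∀ t ∈ Set.Icc (0 : ℝ) 1, {x : H | t ≤ μ x}.Nonempty →
        IsHyperideal f g {x : H | t ≤ μ x}) ↔
      ∀ t ∈ Set.Icc (0 : ℝ) t₀, IsHyperideal f g {x : H | t ≤ μ x}) := by
  obtain ⟨x₀, hx₀⟩ := hatt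
  haveI : Nonempty (Fin m) := ⟨⟨0, by have := hsr.two_le_m; omega⟩⟩
  have h12 : IsFuzzyHyperideal f g μ →
      ∀ t ∈ Set.Icc (0 : ℝ) 1, {x : H | t ≤ μ x}.Nonempty →
        IsHyperideal f g {x : H | t ≤ μ x} := by
    rintro ⟨h1, h2⟩ t _ hne
    refine ⟨hne, ?_, ?_⟩
    · intro x hx z hz
      have hbd : BddBelow (Set.range fun i => μ (x i)) :=
        ⟨0, by rintro _ ⟨i, rfl⟩; exact (hμ _).1⟩
      have ht : t ≤ ⨅ i, μ (x i) := le_ciInf fun i => hx i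
      have h3 : (⨅ i, μ (x i)) ≤ sInf (μ '' f x) := h1 x
      have h4 : sInf (μ '' f x) ≤ μ z :=
        csInf_le ⟨0, by rintro _ ⟨w, _, rfl⟩; exact (hμ _).1⟩ ⟨z, hz, rfl⟩
      exact le_trans ht (le_trans h3 h4)
    · intro a j x hx
      have := h2 (Function.update a j x) j
      rw [Function.update_self] at this
      exact le_trans hx this
  have h21 : (∀ t ∈ Set.Icc (0 : ℝ) 1, {x : H | t ≤ μ x}.Nonempty →
        IsHyperideal f g {x : H | t ≤ μ x}) → IsFuzzyHyperideal f g μ := by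
    intro h
    constructor
    · intro x
      obtain ⟨i₀, hi₀⟩ := Finite.exists_min fun i => μ (x i)
      have hbd : BddBelow (Set.range fun i => μ (x i)) :=
        ⟨0, by rintro _ ⟨i, rfl⟩; exact (hμ _).1⟩
      have heq : (⨅ i, μ (x i)) = μ (x i₀) :=
        le_antisymm (ciInf_le hbd i₀) (le_ciInf hi₀)
      set t := ⨅ i, μ (x i) with htdef
      have hI := h t ⟨heq ▸ (hμ _).1, heq ▸ (hμ _).2⟩ ⟨x i₀, heq.le⟩
      have hsub : f x ⊆ {y : H | t ≤ μ y} :=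
        hI.2.1 x fun i => ciInf_le hbd i
      refine le_csInf ((hsr.nonempty_values x).image μ) ?_
      rintro _ ⟨z, hz, rfl⟩
      exact hsub hz
    · intro x j
      have hI := h (μ (x j)) (hμ _) ⟨x j, by simp⟩
      have := hI.2.2 x j (x j) (by simp)
      rwa [Function.update_eq_self] at this
  have ht01 : t₀ ≤ 1 := hx₀ ▸ (hμ x₀).2
  refine ⟨⟨h12, h21⟩, ?_, ?_⟩
  · intro h t ht
    exact h t ⟨ht.1, le_trans ht.2 ht01⟩ ⟨x₀, Set.mem_setOf.mpr (hx₀ ▸ ht.2)⟩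
  · intro h t ht hne
    obtain ⟨y, hy⟩ := hne
    exact h t ⟨ht.1, le_trans hy (ht₀ y)⟩
end
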